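/- For all positive integers N and m with m ≥ 1, the interaction coefficient satisfies S_{N, N, (2m+1)N, (2m−1)N} = 0. -/
import Mathlib

open Real Set Finset

/-- The function 𝔪(j,k) = (1/2)·sgn(j)·sgn(k)·min(|j|,|k|). -/
noncomputable def frakm (j k : ℤ) : ℝ :=
  (1 / 2 : ℝ) * (j.sign : ℝ) * (k.sign : ℝ) * ((min |j| |k| : ℤ) : ℝ)

/-- The interaction coefficient S_{j,k,l,m}. -/
noncomputable def Scoef (j k l m : ℤ) : ℝ :=
  if Even (j + k + l + m) then
    frakm (j + k - l) m + frakm (j - k + l) m + frakm (-j + k + l) m - frakm (j + k + l) m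
  else 0

lemma frakm_calc (a b : ℤ) (ha : 0 < a) (hb : 0 < b) (hab : b ≤ a) :
    frakm a b = (1/2 : ℝ) * b := by
  unfold frakm
  rw [Int.sign_eq_one_of_pos ha, Int.sign_eq_one_of_pos hb,
    abs_of_pos ha, abs_of_pos hb, min_eq_right hab]
  push_cast; ring

lemma frakm_calc_neg (a b : ℤ) (ha : a < 0) (hb : 0 < b) (hab : b ≤ -a) :
    frakm a b = -((1/2 : ℝ) * b) := by
  unfold frakm
  rw [Int.sign_eq_neg_one_of_neg ha, Int.sign_eq_one_of_pos hb,
    abs_of_neg ha, abs_of_pos hb, min_eq_right hab]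
  push_cast; ring

/-- S_{N,N,(2m+1)N,(2m-1)N} = 0 for N ≥ 1, m ≥ 1. -/
theorem interaction_resonance_cancellation (N m : ℕ) (hN : 0 < N) (hm : 1 ≤ m) :
    Scoef N N ((2 * m + 1) * N) ((2 * m - 1) * N) = 0 := by
  set n := (N : ℤ) with hn
  set M := (m : ℤ) with hM
  have hn1 : (1:ℤ) ≤ n := by omega
  have hM1 : (1:ℤ) ≤ M := by omega
  unfold Scoef
  rw [if_pos (by refine ⟨(2*M+1)*n, by ring⟩)]
  have e1 : n + n - (2*M+1)*n = -((2*M-1)*n) := by ring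
  have e2 : n - n + (2*M+1)*n = (2*M+1)*n := by ring
  have e3 : -n + n + (2*M+1)*n = (2*M+1)*n := by ring
  have e4 : n + n + (2*M+1)*n = (2*M+3)*n := by ring
  rw [e1, e2, e3, e4]
  have hb : (0:ℤ) < (2*M-1)*n := by nlinarith
  rw [frakm_calc_neg _ _ (by omega) hb (by omega),
      frakm_calc _ _ (by nlinarith) hb (by nlinarith),
      frakm_calc _ _ (by nlinarith) hb (by nlinarith)]
  ring
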